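/- arXiv:math/0508327 — 3 statements merged into one kernel-verified Lean document; each statement's English description precedes it below -/
import Mathlib

section
/- Let G be a group, let a ∈ G, and define the 6-periodic sequence with consecutive values 1, a, a, 1, a⁻¹, a⁻¹ (so a(m)*a(m+2) = a(m+1) for all m). If b ∈ G satisfies a(m) * b * a(m+2) = b * a(m+1) * b for all m ∈ ℤ, then b = 1. -/
theorem stmt_5 (G : Type*) [Group G] (x : G) (a : ℤ → G)
    (hper : ∀ m : ℤ, a (m + 6) = a m)
    (h0 : a 0 = 1) (h1 : a 1 = x) (h2 : a 2 = x) (h3 : a 3 = 1)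
    (h4 : a 4 = x⁻¹) (h5 : a 5 = x⁻¹)
    (hrec : ∀ m : ℤ, a m * a (m + 2) = a (m + 1))
    (b : G) (hb : ∀ m : ℤ, a m * b * a (m + 2) = b * a (m + 1) * b) :
    b = 1 := by
  have h := hb 0
  norm_num [h0, h1, h2] at h
  exact h
end

section
/- Let G be a group, a : ℤ → G a sequence with a(m)*a(m+2) = a(m+1) for all m, and b₃, b₄ ∈ G satisfying: (i) a(m) * b₃ * a(m+2) = b₃ * a(m+1) * b₃ for all m; (ii) a(m) * b₄ = b₄ * a(m+1) for all m; (iii) b₃ * b₄ * b₃ = b₄ * b₃ * b₄. If b₃ and b₄ commute, then b₃ = b₄ = 1 and a(m) = 1 for all m. -/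
/-! Condition (iii) together with commutativity forces `b₃ = b₄ =: b`. Then (ii) rewrites the
left side of (i) as `b * a (m + 1) * a (m + 2)`, so cancelling gives `a (m + 2) = b` for every `m`,
and the recurrence `a m * a (m + 2) = a (m + 1)` becomes `b * b = b`, i.e. `b = 1`. -/

theorem eq_of_braid_of_commute {M : Type*} [Mul M] [IsLeftCancelMul M] {x y : M}
    (hbr : x * y * x = y * x * y) (hcomm : x * y = y * x) : x = y :=
  mul_left_cancel (hcomm ▸ hbr)

theorem eq_of_mul_mul_eq_of_mul_eq {M : Type*} [Semigroup M] [IsLeftCancelMul M] {x y z b : M}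
    (h3 : x * b * z = b * y * b) (h4 : x * b = b * y) : z = b :=
  mul_left_cancel (h4 ▸ h3)

theorem stmt_6 (G : Type*) [Group G] (a : ℤ → G)
    (h : ∀ m : ℤ, a m * a (m + 2) = a (m + 1)) (b₃ b₄ : G)
    (h3 : ∀ m : ℤ, a m * b₃ * a (m + 2) = b₃ * a (m + 1) * b₃)
    (h4 : ∀ m : ℤ, a m * b₄ = b₄ * a (m + 1))
    (hbr : b₃ * b₄ * b₃ = b₄ * b₃ * b₄)
    (hcomm : b₃ * b₄ = b₄ * b₃) :
    b₃ = 1 ∧ b₄ = 1 ∧ ∀ m : ℤ, a m = 1 := by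
  obtain rfl : b₃ = b₄ := eq_of_braid_of_commute hbr hcomm
  have ha : ∀ m, a m = b₃ := fun m => by
    simpa only [sub_add_cancel] using eq_of_mul_mul_eq_of_mul_eq (h3 (m - 2)) (h4 (m - 2))
  have hb : b₃ = 1 := mul_eq_left.mp (by simpa only [ha] using h 0)
  exact ⟨hb, hb, fun m => (ha m).trans hb⟩
end

section
/- For every sequence a : ℤ → S_3 satisfying a(m) * a(m+2) = a(m+1) for all m ∈ ℤ, and every b ∈ S_3 satisfying a(m) * b * a(m+2) = b * a(m+1) * b for all m ∈ ℤ, one has b = 1. -/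
set_option maxRecDepth 10000 in
lemma key3_stmt15 : ∀ x y b : Equiv.Perm (Fin 3),
    x * b * (x⁻¹ * y) = b * y * b →
    y * b * (y⁻¹ * (x⁻¹ * y)) = b * (x⁻¹ * y) * b →
    (x⁻¹ * y) * b * ((x⁻¹ * y)⁻¹ * (y⁻¹ * (x⁻¹ * y))) = b * (y⁻¹ * (x⁻¹ * y)) * b →
    b = 1 := by decide

theorem stmt_15 (a : ℤ → Equiv.Perm (Fin 3))
    (h : ∀ m : ℤ, a m * a (m + 2) = a (m + 1)) (b : Equiv.Perm (Fin 3))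
    (hb : ∀ m : ℤ, a m * b * a (m + 2) = b * a (m + 1) * b) :
    b = 1 := by
  have h0 := h 0; have h1 := h 1; have h2 := h 2
  have hb0 := hb 0; have hb1 := hb 1; have hb2 := hb 2
  norm_num at h0 h1 h2 hb0 hb1 hb2
  have e2 : a 2 = (a 0)⁻¹ * a 1 := by rw [← h0]; group
  have e3 : a 3 = (a 1)⁻¹ * a 2 := by rw [← h1]; group
  have e4 : a 4 = (a 2)⁻¹ * a 3 := by rw [← h2]; group
  apply key3_stmt15 (a 0) (a 1) b
  · rw [← e2]; exact hb0
  · rw [← e2, ← e3]; exact hb1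
  · rw [← e2, ← e3, ← e4]; exact hb2
end
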